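/- Let ε ∈ ℝ and k₃ ≠ 0. On any open interval I containing 0 on which 1 − k₃ s⁴ > 0 and 1 + 2ε ∫₀ˢ (1 − k₃ σ⁴)^{1/4} dσ > 0, the function φ(s) := √( 1 + 2ε ∫₀ˢ (1 − k₃ σ⁴)^{1/4} dσ ) satisfies equation (E) with parameters (k₁, k₂, k₃) = (0, 0, k₃), i.e. −s k₃ s² (φφ' − s φ'² − s φφ'') − (φ'² + φφ'') = 0 on I; moreover φ(0) = 1 and φ'(0) = ε. -/

import Mathlib

/-- Equation (E) with parameters `k₁ k₂ k₃` for a real function `φ` at the point `s`: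
`s(k₂ − k₃ s²)(φφ' − s φ'² − s φφ'') − (φ'² + φφ'') + k₁ φ(φ − s φ') = 0`. -/
def eqE (k₁ k₂ k₃ : ℝ) (φ : ℝ → ℝ) (s : ℝ) : Prop :=
  s * (k₂ - k₃ * s ^ 2) *
      (φ s * deriv φ s - s * (deriv φ s) ^ 2 - s * φ s * deriv (deriv φ) s) -
    ((deriv φ s) ^ 2 + φ s * deriv (deriv φ) s) +
    k₁ * φ s * (φ s - s * deriv φ s) = 0

/-- `φ(s) = √(1 + 2ε ∫₀ˢ (1 − k₃ σ⁴)^{1/4} dσ)`. -/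
noncomputable def phi16 (k₃ ε : ℝ) (s : ℝ) : ℝ :=
  Real.sqrt (1 + 2 * ε * ∫ σ in (0:ℝ)..s, (1 - k₃ * σ ^ 4) ^ ((1 : ℝ) / 4))

/-!
Since `φ² = 1 + 2ε ∫₀ˢ g` with `g(σ) = (1 − k₃σ⁴)^{1/4}`, we have `φφ' = εg` and hence
`φ'² + φφ'' = (φφ')' = εg'`. For `k₁ = k₂ = 0` equation (E) reads
`k₃ s³ (φφ' − s (φφ')') + (φφ')' = 0`, and with `g' = −k₃ s³ g / (1 − k₃ s⁴)` this reduces to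
the identity `(1 − k₃ s⁴) + k₃ s⁴ = 1`.
-/

open Filter Topology

lemma eqE_zero_zero_iff {k₃ s : ℝ} {φ : ℝ → ℝ} :
    eqE 0 0 k₃ φ s ↔
      k₃ * s ^ 3 * (φ s * deriv φ s - s * (deriv φ s ^ 2 + φ s * deriv (deriv φ) s)) +
        (deriv φ s ^ 2 + φ s * deriv (deriv φ) s) = 0 := by
  rw [eqE]
  constructor <;> intro h <;> linear_combination -h

lemma deriv_sq_add_mul_deriv_deriv {φ u : ℝ → ℝ} {u' s : ℝ}
    (hφ : ∀ᶠ t in 𝓝 s, HasDerivAt φ (u t / φ t) t) (hφs : φ s ≠ 0) (hu : HasDerivAt u u' s) :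
    deriv φ s ^ 2 + φ s * deriv (deriv φ) s = u' := by
  have hderiv : deriv φ =ᶠ[𝓝 s] fun t => u t / φ t := hφ.mono fun t ht => ht.deriv
  have hφ' : HasDerivAt φ (u s / φ s) s := hφ.self_of_nhds
  rw [hderiv.deriv_eq, (hu.fun_div hφ' hφs).deriv, hφ'.deriv]
  field_simp
  ring

lemma continuous_one_sub_mul_pow_four_rpow (k : ℝ) :
    Continuous fun σ : ℝ => (1 - k * σ ^ 4) ^ ((1 : ℝ) / 4) :=
  (by fun_prop : Continuous fun σ : ℝ => 1 - k * σ ^ 4).rpow_const fun _ => Or.inr (by norm_num)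

lemma hasDerivAt_one_sub_mul_pow_four_rpow {k s : ℝ} (hs : 0 < 1 - k * s ^ 4) :
    HasDerivAt (fun σ : ℝ => (1 - k * σ ^ 4) ^ ((1 : ℝ) / 4))
      (-(k * s ^ 3) * ((1 - k * s ^ 4) ^ ((1 : ℝ) / 4) / (1 - k * s ^ 4))) s := by
  have hP : HasDerivAt (fun σ : ℝ => 1 - k * σ ^ 4) (-(k * (4 * s ^ 3))) s := by
    simpa using ((hasDerivAt_pow 4 s).const_mul k).const_sub 1
  refine ((Real.hasDerivAt_rpow_const (p := (1 : ℝ) / 4) (Or.inl hs.ne')).comp s hP).congr_deriv ?_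
  rw [Real.rpow_sub_one hs.ne']
  ring

lemma hasDerivAt_phi16 {k₃ ε s : ℝ}
    (hs : 0 < 1 + 2 * ε * ∫ σ in (0:ℝ)..s, (1 - k₃ * σ ^ 4) ^ ((1 : ℝ) / 4)) :
    HasDerivAt (phi16 k₃ ε) (ε * (1 - k₃ * s ^ 4) ^ ((1 : ℝ) / 4) / phi16 k₃ ε s) s := by
  have hg := continuous_one_sub_mul_pow_four_rpow k₃
  have hint := intervalIntegral.integral_hasDerivAt_right (hg.intervalIntegrable 0 s)
    (hg.stronglyMeasurableAtFilter _ _) hg.continuousAt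
  have hsqrt := (Real.hasDerivAt_sqrt hs.ne').comp s ((hint.const_mul (2 * ε)).const_add 1)
  have hpos : 0 < phi16 k₃ ε s := Real.sqrt_pos.2 hs
  refine hsqrt.congr_deriv ?_
  rw [← phi16]
  field_simp

lemma phi16_zero (k₃ ε : ℝ) : phi16 k₃ ε 0 = 1 := by
  simp [phi16]

theorem stmt16_general (ε k₃ : ℝ) (a b : ℝ)
    (hpos : ∀ s ∈ Set.Ioo a b,
      0 < 1 - k₃ * s ^ 4 ∧
      0 < 1 + 2 * ε * ∫ σ in (0:ℝ)..s, (1 - k₃ * σ ^ 4) ^ ((1 : ℝ) / 4)) :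
    (∀ s ∈ Set.Ioo a b, eqE 0 0 k₃ (phi16 k₃ ε) s) ∧
    phi16 k₃ ε 0 = 1 ∧
    deriv (phi16 k₃ ε) 0 = ε := by
  refine ⟨fun s hs => ?_, phi16_zero k₃ ε, ?_⟩
  · obtain ⟨hP, hQ⟩ := hpos s hs
    have hφ : ∀ᶠ t in 𝓝 s, HasDerivAt (phi16 k₃ ε)
        (ε * (1 - k₃ * t ^ 4) ^ ((1 : ℝ) / 4) / phi16 k₃ ε t) t :=
      Filter.eventually_of_mem (isOpen_Ioo.mem_nhds hs) fun t ht => hasDerivAt_phi16 (hpos t ht).2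
    have hφs : phi16 k₃ ε s ≠ 0 := (Real.sqrt_pos.2 hQ).ne'
    have hmul : phi16 k₃ ε s * deriv (phi16 k₃ ε) s = ε * (1 - k₃ * s ^ 4) ^ ((1 : ℝ) / 4) := by
      rw [hφ.self_of_nhds.deriv]
      field_simp
    rw [eqE_zero_zero_iff, hmul, deriv_sq_add_mul_deriv_deriv hφ hφs
      ((hasDerivAt_one_sub_mul_pow_four_rpow hP).const_mul ε)]
    field_simp
    ring
  · rw [(hasDerivAt_phi16 (by simp)).deriv, phi16_zero]
    simp

theorem stmt16 (ε k₃ : ℝ) (hk₃ : k₃ ≠ 0) (a b : ℝ) (ha : a < 0) (hb : 0 < b)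
    (hpos : ∀ s ∈ Set.Ioo a b,
      0 < 1 - k₃ * s ^ 4 ∧
      0 < 1 + 2 * ε * ∫ σ in (0:ℝ)..s, (1 - k₃ * σ ^ 4) ^ ((1 : ℝ) / 4)) :
    (∀ s ∈ Set.Ioo a b, eqE 0 0 k₃ (phi16 k₃ ε) s) ∧
    phi16 k₃ ε 0 = 1 ∧
    deriv (phi16 k₃ ε) 0 = ε :=
  stmt16_general ε k₃ a b hpos
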